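/- Let $\mathcal{G}$ be a connected undirected graph with $n$ vertices, incidence-based Laplacian $L = A^\top A$ (where $A$ is the edge-vertex incidence matrix with entries $+1, -1$ per edge), and let $\alpha(\mathcal{G})$ be the smallest nonzero eigenvalue of $L$. Define $\beta(\mathcal{G})$ as the smallest nonnegative number $\beta$ such that $\sum_{(i,j)} (x_j - x_i)^2 \leq \beta \sum_{(i,j)\in\mathcal{E}} (x_j - x_i)^2$ for all $x \in \mathbb{R}^n$ (sum on the left over all unordered pairs of vertices, on the right over edges). Then $\beta(\mathcal{G}) = n / \alpha(\mathcal{G})$. -/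

import Mathlib

/-!
Both sides of the inequality defining `β` are unchanged when a constant is added to `x`, so it
suffices to consider `x` with `∑ i, x i = 0`. For such `x` the left side is `n * (x ⬝ᵥ x)` and the
right side is `x ⬝ᵥ L *ᵥ x`. Connectivity says that the kernel of `L` consists of the constant
vectors, so such an `x` is orthogonal to `ker L`, and expanding it in an orthonormal eigenbasis of
`L` gives `α * (x ⬝ᵥ x) ≤ x ⬝ᵥ L *ᵥ x`; hence `β ≤ n / α`. Conversely an eigenvector for `α` is
orthogonal to the constants and attains equality, hence `n / α ≤ β`.
-/

open Module.End InnerProductSpace Matrix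

theorem LinearMap.IsSymmetric.mul_norm_sq_le_inner_map_self {E : Type*}
    [NormedAddCommGroup E] [InnerProductSpace ℝ E] [FiniteDimensional ℝ E]
    {T : E →ₗ[ℝ] E} (hT : T.IsSymmetric) {α : ℝ}
    (hα : ∀ μ ≠ 0, HasEigenvalue T μ → α ≤ μ) {y : E} (hy : y ∈ (LinearMap.ker T)ᗮ) :
    α * ‖y‖ ^ 2 ≤ ⟪T y, y⟫_ℝ := by
  set b := hT.eigenvectorBasis rfl
  have hnorm : ‖y‖ ^ 2 = ∑ i, b.repr y i ^ 2 := by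
    rw [← b.repr.norm_map, EuclideanSpace.norm_sq_eq]
    simp
  have hinner : ⟪T y, y⟫_ℝ = ∑ i, hT.eigenvalues rfl i * b.repr y i ^ 2 := by
    rw [← b.repr.inner_map_map, PiLp.inner_apply]
    simp [b, hT.eigenvectorBasis_apply_self_apply, sq, mul_left_comm]
  rw [hnorm, hinner, Finset.mul_sum]
  refine Finset.sum_le_sum fun i _ => ?_
  by_cases h0 : hT.eigenvalues rfl i = 0
  · have hker : b i ∈ LinearMap.ker T := by simp [b, h0]
    have : b.repr y i = 0 := by
      rw [b.repr_apply_apply]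
      exact (Submodule.mem_orthogonal _ _).mp hy _ hker
    simp [this]
  · exact mul_le_mul_of_nonneg_right (hα _ h0 (hT.hasEigenvalue_eigenvalues rfl i)) (sq_nonneg _)

theorem Matrix.IsHermitian.mul_dotProduct_self_le_dotProduct_mulVec {ι : Type*} [Fintype ι]
    [DecidableEq ι] {L : Matrix ι ι ℝ} (hL : L.IsHermitian) {α : ℝ}
    (hα : ∀ μ ≠ 0, (∃ v : ι → ℝ, v ≠ 0 ∧ L *ᵥ v = μ • v) → α ≤ μ) {y : ι → ℝ}
    (hy : ∀ w, L *ᵥ w = 0 → w ⬝ᵥ y = 0) :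
    α * (y ⬝ᵥ y) ≤ y ⬝ᵥ L *ᵥ y := by
  have hT : (toEuclideanLin L).IsSymmetric := isSymmetric_toEuclideanLin_iff.mpr hL
  have hαT : ∀ μ ≠ 0, HasEigenvalue (toEuclideanLin L) μ → α ≤ μ := by
    intro μ hμ hev
    obtain ⟨w, hw, hw0⟩ := hev.exists_hasEigenvector
    refine hα μ hμ ⟨w, fun h => hw0 (WithLp.ofLp_injective _ h), ?_⟩
    exact congrArg WithLp.ofLp (mem_eigenspace_iff.mp hw)
  have hyT : WithLp.toLp 2 y ∈ (LinearMap.ker (toEuclideanLin L))ᗮ := by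
    refine (Submodule.mem_orthogonal _ _).mpr fun w hw => ?_
    rw [EuclideanSpace.inner_eq_star_dotProduct, dotProduct_comm]
    exact hy _ (congrArg WithLp.ofLp hw)
  have key := hT.mul_norm_sq_le_inner_map_self hαT hyT
  rwa [← real_inner_self_eq_norm_sq, toLpLin_toLp, EuclideanSpace.inner_toLp_toLp,
    EuclideanSpace.inner_toLp_toLp, star_trivial, star_trivial, toLin'_apply] at key

namespace Matrix

variable {m n : Type*} [Fintype m] [Fintype n]

theorem dotProduct_transpose_mul_mulVec {R : Type*} [CommSemiring R] (A : Matrix m n R)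
    (x y : n → R) :
    x ⬝ᵥ (Aᵀ * A) *ᵥ y = A *ᵥ x ⬝ᵥ A *ᵥ y := by
  rw [← mulVec_mulVec, dotProduct_mulVec, vecMul_transpose]

theorem nonneg_of_transpose_mul_mulVec_eq_smul (A : Matrix m n ℝ) {μ : ℝ} {v : n → ℝ}
    (hv0 : v ≠ 0) (hv : (Aᵀ * A) *ᵥ v = μ • v) : 0 ≤ μ := by
  have hpos : 0 < v ⬝ᵥ v := by simpa using dotProduct_self_star_pos_iff.mpr hv0
  have hform : μ * (v ⬝ᵥ v) = A *ᵥ v ⬝ᵥ A *ᵥ v := by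
    rw [← dotProduct_transpose_mul_mulVec, hv, dotProduct_smul, smul_eq_mul]
  have hsq : 0 ≤ A *ᵥ v ⬝ᵥ A *ᵥ v := by simpa using dotProduct_star_self_nonneg (A *ᵥ v)
  exact nonneg_of_mul_nonneg_left (hform ▸ hsq) hpos

theorem sum_eq_zero_of_transpose_mul_mulVec_eq_smul {A : Matrix m n ℝ} (hA1 : A *ᵥ 1 = 0)
    {μ : ℝ} (hμ : μ ≠ 0) {v : n → ℝ} (hv : (Aᵀ * A) *ᵥ v = μ • v) : ∑ i, v i = 0 := by
  have : μ * ∑ i, v i = 0 := by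
    rw [← one_dotProduct, ← smul_eq_mul, ← dotProduct_smul, ← hv,
      dotProduct_transpose_mul_mulVec, hA1, zero_dotProduct]
  exact (mul_eq_zero.mp this).resolve_left hμ

theorem dotProduct_eq_zero_of_transpose_mul_mulVec_eq_zero {A : Matrix m n ℝ}
    (hker : ∀ w, A *ᵥ w = 0 → ∃ t : ℝ, w = fun _ => t) {y : n → ℝ} (hy : ∑ i, y i = 0)
    {w : n → ℝ} (hw : (Aᵀ * A) *ᵥ w = 0) : w ⬝ᵥ y = 0 := by
  have hAw : A *ᵥ w = 0 := by
    rw [← dotProduct_self_eq_zero, ← dotProduct_transpose_mul_mulVec, hw, dotProduct_zero]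
  obtain ⟨t, rfl⟩ := hker w hAw
  simp [dotProduct, ← Finset.mul_sum, hy]

end Matrix

theorem half_sum_sum_sub_sq {ι : Type*} [Fintype ι] (x : ι → ℝ) :
    1 / 2 * ∑ i, ∑ j, (x j - x i) ^ 2 = Fintype.card ι * (x ⬝ᵥ x) - (∑ i, x i) ^ 2 := by
  simp only [sub_sq, Finset.sum_add_distrib, Finset.sum_sub_distrib, Finset.sum_const,
    Finset.card_univ, nsmul_eq_mul, ← Finset.mul_sum, ← Finset.sum_mul, mul_assoc]
  rw [dotProduct]
  simp only [← sq]
  ring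

section Incidence

variable {ι ε : Type*} [Fintype ι] [DecidableEq ι] {edges : ε → ι × ι} {A : Matrix ε ι ℝ}

theorem mulVec_apply_of_incidence (hne : ∀ e, (edges e).1 ≠ (edges e).2)
    (hA : ∀ e i, A e i = if i = (edges e).1 then 1 else if i = (edges e).2 then -1 else 0)
    (x : ι → ℝ) (e : ε) : (A *ᵥ x) e = x (edges e).1 - x (edges e).2 := by
  have hrow : A e = Pi.single (edges e).1 1 - Pi.single (edges e).2 1 := by
    ext i
    rw [hA]
    by_cases h1 : i = (edges e).1 <;> by_cases h2 : i = (edges e).2 <;>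
      simp [h1, h2, hne e, (hne e).symm]
  rw [mulVec, hrow, sub_dotProduct, single_one_dotProduct, single_one_dotProduct]

theorem dotProduct_transpose_mul_mulVec_self_of_incidence [Fintype ε]
    (hne : ∀ e, (edges e).1 ≠ (edges e).2)
    (hA : ∀ e i, A e i = if i = (edges e).1 then 1 else if i = (edges e).2 then -1 else 0)
    (x : ι → ℝ) :
    x ⬝ᵥ (Aᵀ * A) *ᵥ x = ∑ e, (x (edges e).2 - x (edges e).1) ^ 2 := by
  rw [dotProduct_transpose_mul_mulVec, dotProduct]
  exact Finset.sum_congr rfl fun e _ => by rw [mulVec_apply_of_incidence hne hA]; ring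

theorem half_sum_sum_sub_sq_le_card_div_mul [Fintype ε] [Nonempty ι]
    (hne : ∀ e, (edges e).1 ≠ (edges e).2)
    (hA : ∀ e i, A e i = if i = (edges e).1 then 1 else if i = (edges e).2 then -1 else 0)
    (hker : ∀ w, A *ᵥ w = 0 → ∃ t : ℝ, w = fun _ => t) {α : ℝ} (hα : 0 < α)
    (hαmin : ∀ μ ≠ 0, (∃ v : ι → ℝ, v ≠ 0 ∧ (Aᵀ * A) *ᵥ v = μ • v) → α ≤ μ) (x : ι → ℝ) :
    1 / 2 * ∑ i, ∑ j, (x j - x i) ^ 2 ≤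
      Fintype.card ι / α * ∑ e, (x (edges e).2 - x (edges e).1) ^ 2 := by
  set y : ι → ℝ := fun i => x i - (∑ j, x j) / Fintype.card ι
  have hy : ∑ i, y i = 0 := by
    have hcard : (Fintype.card ι : ℝ) ≠ 0 := Nat.cast_ne_zero.mpr Fintype.card_ne_zero
    simp [y, Finset.sum_sub_distrib, mul_div_cancel₀, hcard]
  have hL : (Aᵀ * A).IsHermitian := by
    simpa [conjTranspose_eq_transpose_of_trivial] using isHermitian_conjTranspose_mul_self A
  have hspectral : α * (y ⬝ᵥ y) ≤ y ⬝ᵥ (Aᵀ * A) *ᵥ y :=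
    hL.mul_dotProduct_self_le_dotProduct_mulVec hαmin
      fun w hw => dotProduct_eq_zero_of_transpose_mul_mulVec_eq_zero hker hy hw
  calc 1 / 2 * ∑ i, ∑ j, (x j - x i) ^ 2 = 1 / 2 * ∑ i, ∑ j, (y j - y i) ^ 2 := by
        simp [y]
    _ = Fintype.card ι / α * (α * (y ⬝ᵥ y)) := by
        rw [half_sum_sum_sub_sq, hy]; field_simp; ring
    _ ≤ Fintype.card ι / α * (y ⬝ᵥ (Aᵀ * A) *ᵥ y) := by gcongr
    _ = Fintype.card ι / α * ∑ e, (x (edges e).2 - x (edges e).1) ^ 2 := by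
        simp [dotProduct_transpose_mul_mulVec_self_of_incidence hne hA, y]

theorem card_le_mul_of_transpose_mul_mulVec_eq_smul [Fintype ε]
    (hne : ∀ e, (edges e).1 ≠ (edges e).2)
    (hA : ∀ e i, A e i = if i = (edges e).1 then 1 else if i = (edges e).2 then -1 else 0)
    (hA1 : A *ᵥ 1 = 0) {μ : ℝ} (hμ : μ ≠ 0) {v : ι → ℝ} (hv0 : v ≠ 0)
    (hv : (Aᵀ * A) *ᵥ v = μ • v) {b : ℝ}
    (hb : ∀ x : ι → ℝ, 1 / 2 * ∑ i, ∑ j, (x j - x i) ^ 2 ≤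
      b * ∑ e, (x (edges e).2 - x (edges e).1) ^ 2) :
    Fintype.card ι ≤ b * μ := by
  have hpos : 0 < v ⬝ᵥ v := by simpa using dotProduct_self_star_pos_iff.mpr hv0
  have hbv := hb v
  rw [half_sum_sum_sub_sq, sum_eq_zero_of_transpose_mul_mulVec_eq_smul hA1 hμ hv,
    ← dotProduct_transpose_mul_mulVec_self_of_incidence hne hA, hv, dotProduct_smul,
    smul_eq_mul] at hbv
  have : Fintype.card ι * (v ⬝ᵥ v) ≤ b * μ * (v ⬝ᵥ v) := by linarith
  exact le_of_mul_le_mul_right this hpos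

end Incidence

/-- Lemma 3 (β(𝒢) = n/α(𝒢)). The graph is given by its edges and signed
incidence matrix `A`; connectivity is encoded by the kernel of `A` being the
span of the all-ones vector; `α` is the smallest nonzero eigenvalue of the
Laplacian `L = Aᵀ A`; `β` is the least nonnegative constant such that the sum
of `(x_j - x_i)²` over all unordered pairs is bounded by `β` times the sum
over edges. -/
theorem stmt_6 (n m : ℕ) (hn : 1 ≤ n)
    (edges : Fin m → Fin n × Fin n)
    (hne : ∀ e, (edges e).1 ≠ (edges e).2)
    (A : Matrix (Fin m) (Fin n) ℝ)
    (hA : ∀ e i, A e i =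
      if i = (edges e).1 then 1 else if i = (edges e).2 then -1 else 0)
    (hconn : ∀ x : Fin n → ℝ, A.mulVec x = 0 ↔ ∃ t : ℝ, x = fun _ => t)
    (L : Matrix (Fin n) (Fin n) ℝ) (hL : L = A.transpose * A)
    (α : ℝ) (hα0 : α ≠ 0)
    (hαeig : ∃ v : Fin n → ℝ, v ≠ 0 ∧ L.mulVec v = α • v)
    (hαmin : ∀ μ : ℝ, μ ≠ 0 → (∃ v : Fin n → ℝ, v ≠ 0 ∧ L.mulVec v = μ • v) → α ≤ μ)
    (β : ℝ)
    (hβ : IsLeast {b : ℝ | 0 ≤ b ∧ ∀ x : Fin n → ℝ,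
        (1 / 2) * ∑ i, ∑ j, (x j - x i)^2 ≤
          b * ∑ e, (x (edges e).2 - x (edges e).1)^2} β) :
    β = (n : ℝ) / α := by
  subst hL
  obtain ⟨v, hv0, hv⟩ := hαeig
  have hα : 0 < α := (nonneg_of_transpose_mul_mulVec_eq_smul A hv0 hv).lt_of_ne' hα0
  have : Nonempty (Fin n) := ⟨⟨0, hn⟩⟩
  refine le_antisymm (hβ.2 ⟨by positivity, fun x => ?_⟩) ?_
  · simpa using half_sum_sum_sub_sq_le_card_div_mul hne hA (fun w => (hconn w).mp) hα hαmin x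
  · rw [div_le_iff₀ hα]
    simpa using card_le_mul_of_transpose_mul_mulVec_eq_smul hne hA ((hconn 1).mpr ⟨1, rfl⟩)
      hα0 hv0 hv hβ.1.2
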